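/- Let D be a positive integer, and let s, t be integers with 0 ≤ s < t ≤ D. Put L_a(x,y) = (1 − a/D)·x + (a/D)·y and V_{s,t} = ∫₀¹∫₀¹ cos(2π(D+1)·L_s(x,y)) · cos(2πD·L_t(x,y)) dy dx. Then V_{s,t} = (sin²(πs/D)/(2π²)) · [ 1/((t − s − s/D)·(t − s + 1 − s/D)) − 1/((s + t + s/D)·(2D − s − t + 1 − s/D)) ]. Moreover, V_{s,t} > 0 if s > 0, and V_{0,t} = 0. -/
import Mathlib
open Real intervalIntegral
set_option maxHeartbeats 1000000

lemma intCos (c q : ℝ) (hq : q ≠ 0) :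
    ∫ y in (0:ℝ)..1, Real.cos (q * y + c) = (Real.sin (q + c) - Real.sin c) / q := by
  rw [intervalIntegral.integral_comp_mul_add Real.cos hq c]
  simp [integral_cos]
  ring

lemma intSin (c p : ℝ) (hp : p ≠ 0) :
    ∫ x in (0:ℝ)..1, Real.sin (p * x + c) = (Real.cos c - Real.cos (p + c)) / p := by
  rw [intervalIntegral.integral_comp_mul_add Real.sin hp c]
  simp [integral_sin]
  ring

lemma L3 (p q : ℝ) (hp : p ≠ 0) (hq : q ≠ 0) :
    ∫ x in (0:ℝ)..1, (Real.sin (q + p * x) - Real.sin (p * x)) / q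
      = (Real.cos p + Real.cos q - Real.cos (p + q) - 1) / (p * q) := by
  have h1 : ∀ x : ℝ, (Real.sin (q + p * x) - Real.sin (p * x)) / q
      = (Real.sin (p * x + q) - Real.sin (p * x + 0)) / q := by
    intro x; rw [add_comm q, add_zero]
  simp only [h1]
  rw [intervalIntegral.integral_div]
  rw [intervalIntegral.integral_sub
    (Continuous.intervalIntegrable (by fun_prop : Continuous fun x => Real.sin (p * x + q)) _ _)
    (Continuous.intervalIntegrable (by fun_prop : Continuous fun x => Real.sin (p * x + 0)) _ _)]
  rw [intSin q p hp, intSin 0 p hp]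
  simp [Real.cos_zero]
  field_simp
  ring

/-- the mixed correlation `V_{s,t}` of `cos(2π(D+1)·)` and `cos(2πD·)`. -/
theorem stmt_14 (D s t : ℤ) (hD : 0 < D) (hs : 0 ≤ s) (hst : s < t) (htD : t ≤ D) :
    ((∫ x in (0 : ℝ)..1, ∫ y in (0 : ℝ)..1,
        Real.cos (2 * Real.pi * ((D : ℝ) + 1) *
            ((1 - (s : ℝ) / (D : ℝ)) * x + ((s : ℝ) / (D : ℝ)) * y)) *
          Real.cos (2 * Real.pi * (D : ℝ) *
            ((1 - (t : ℝ) / (D : ℝ)) * x + ((t : ℝ) / (D : ℝ)) * y)))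
      = Real.sin (Real.pi * (s : ℝ) / (D : ℝ)) ^ 2 / (2 * Real.pi ^ 2) *
          (1 / (((t : ℝ) - (s : ℝ) - (s : ℝ) / (D : ℝ)) *
                ((t : ℝ) - (s : ℝ) + 1 - (s : ℝ) / (D : ℝ)))
            - 1 / (((s : ℝ) + (t : ℝ) + (s : ℝ) / (D : ℝ)) *
                (2 * (D : ℝ) - (s : ℝ) - (t : ℝ) + 1 - (s : ℝ) / (D : ℝ))))) ∧
    (0 < s → 0 < ∫ x in (0 : ℝ)..1, ∫ y in (0 : ℝ)..1,
        Real.cos (2 * Real.pi * ((D : ℝ) + 1) *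
            ((1 - (s : ℝ) / (D : ℝ)) * x + ((s : ℝ) / (D : ℝ)) * y)) *
          Real.cos (2 * Real.pi * (D : ℝ) *
            ((1 - (t : ℝ) / (D : ℝ)) * x + ((t : ℝ) / (D : ℝ)) * y))) ∧
    (s = 0 → (∫ x in (0 : ℝ)..1, ∫ y in (0 : ℝ)..1,
        Real.cos (2 * Real.pi * ((D : ℝ) + 1) *
            ((1 - (s : ℝ) / (D : ℝ)) * x + ((s : ℝ) / (D : ℝ)) * y)) *
          Real.cos (2 * Real.pi * (D : ℝ) *
            ((1 - (t : ℝ) / (D : ℝ)) * x + ((t : ℝ) / (D : ℝ)) * y))) = 0) := by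
  have hD0 : (D : ℝ) ≠ 0 := by positivity
  have hDpos : (0:ℝ) < D := by exact_mod_cast hD
  set u : ℝ := (s : ℝ) / (D : ℝ) with hu
  clear_value u
  have hu0 : 0 ≤ u := by rw [hu]; positivity
  have hsD : s < D := lt_of_lt_of_le hst htD
  have hu1 : u < 1 := by
    rw [hu, div_lt_one hDpos]; exact_mod_cast hsD
  have hts1 : (1:ℝ) ≤ (t:ℝ) - (s:ℝ) := by
    have h' : (s:ℝ) + 1 ≤ (t:ℝ) := by exact_mod_cast Int.add_one_le_iff.mpr hst
    linarith
  have htR : (1:ℝ) ≤ (t:ℝ) := by exact_mod_cast hst.trans_le' hs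
  have hsR : (0:ℝ) ≤ (s:ℝ) := by exact_mod_cast hs
  have htDR : (t:ℝ) ≤ (D:ℝ) := by exact_mod_cast htD
  have A1 : (0:ℝ) < (t:ℝ) - s - u := by linarith
  have A2 : (0:ℝ) < (t:ℝ) - s + 1 - u := by linarith
  have A3 : (0:ℝ) < (s:ℝ) + t + u := by linarith
  have A4 : (0:ℝ) < 2 * (D:ℝ) - s - t + 1 - u := by linarith
  set p₁ : ℝ := 2 * π * (2 * (D:ℝ) - s - t + 1 - u) with hp₁def
  set q₁ : ℝ := 2 * π * ((s:ℝ) + t + u) with hq₁def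
  set p₂ : ℝ := 2 * π * ((t:ℝ) - s + 1 - u) with hp₂def
  set q₂ : ℝ := 2 * π * ((s:ℝ) + u - t) with hq₂def
  clear_value p₁ q₁ p₂ q₂
  have hπ : (0:ℝ) < π := Real.pi_pos
  have hp₁ : p₁ ≠ 0 := by rw [hp₁def]; positivity
  have hq₁ : q₁ ≠ 0 := by rw [hq₁def]; positivity
  have hp₂ : p₂ ≠ 0 := by rw [hp₂def]; positivity
  have hq₂ : q₂ ≠ 0 := by
    rw [hq₂def]
    have : (s:ℝ) + u - t < 0 := by linarith
    intro h
    nlinarith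
  -- pointwise product-to-sum
  have hpoint : ∀ x y : ℝ,
      Real.cos (2 * Real.pi * ((D : ℝ) + 1) *
            ((1 - (s : ℝ) / (D : ℝ)) * x + ((s : ℝ) / (D : ℝ)) * y)) *
          Real.cos (2 * Real.pi * (D : ℝ) *
            ((1 - (t : ℝ) / (D : ℝ)) * x + ((t : ℝ) / (D : ℝ)) * y))
        = (Real.cos (q₁ * y + p₁ * x) + Real.cos (q₂ * y + p₂ * x)) / 2 := by
    intro x y
    set A := 2 * Real.pi * ((D : ℝ) + 1) * ((1 - (s : ℝ) / (D : ℝ)) * x + ((s : ℝ) / (D : ℝ)) * y) with hA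
    set B := 2 * Real.pi * (D : ℝ) * ((1 - (t : ℝ) / (D : ℝ)) * x + ((t : ℝ) / (D : ℝ)) * y) with hB
    clear_value A B
    have e1 : q₁ * y + p₁ * x = A + B := by
      rw [hq₁def, hp₁def, hA, hB, hu]; field_simp; ring
    have e2 : q₂ * y + p₂ * x = A - B := by
      rw [hq₂def, hp₂def, hA, hB, hu]; field_simp; ring
    rw [e1, e2, Real.cos_add, Real.cos_sub]; ring
  have step1 : ∀ x : ℝ,
      (∫ y in (0:ℝ)..1, (Real.cos (q₁ * y + p₁ * x) + Real.cos (q₂ * y + p₂ * x)) / 2)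
        = ((Real.sin (q₁ + p₁ * x) - Real.sin (p₁ * x)) / q₁
           + (Real.sin (q₂ + p₂ * x) - Real.sin (p₂ * x)) / q₂) / 2 := by
    intro x
    rw [intervalIntegral.integral_div]
    rw [intervalIntegral.integral_add
      (Continuous.intervalIntegrable (by fun_prop : Continuous fun y => Real.cos (q₁ * y + p₁ * x)) _ _)
      (Continuous.intervalIntegrable (by fun_prop : Continuous fun y => Real.cos (q₂ * y + p₂ * x)) _ _)]
    rw [intCos (p₁ * x) q₁ hq₁, intCos (p₂ * x) q₂ hq₂]
  have key : (∫ x in (0 : ℝ)..1, ∫ y in (0 : ℝ)..1,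
        Real.cos (2 * Real.pi * ((D : ℝ) + 1) *
            ((1 - (s : ℝ) / (D : ℝ)) * x + ((s : ℝ) / (D : ℝ)) * y)) *
          Real.cos (2 * Real.pi * (D : ℝ) *
            ((1 - (t : ℝ) / (D : ℝ)) * x + ((t : ℝ) / (D : ℝ)) * y)))
      = Real.sin (Real.pi * (s : ℝ) / (D : ℝ)) ^ 2 / (2 * Real.pi ^ 2) *
          (1 / (((t : ℝ) - (s : ℝ) - u) * ((t : ℝ) - (s : ℝ) + 1 - u))
            - 1 / (((s : ℝ) + (t : ℝ) + u) * (2 * (D : ℝ) - (s : ℝ) - (t : ℝ) + 1 - u))) := by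
    simp only [hpoint, step1]
    rw [intervalIntegral.integral_div]
    rw [intervalIntegral.integral_add
      (Continuous.intervalIntegrable (by fun_prop : Continuous fun x => (Real.sin (q₁ + p₁ * x) - Real.sin (p₁ * x)) / q₁) _ _)
      (Continuous.intervalIntegrable (by fun_prop : Continuous fun x => (Real.sin (q₂ + p₂ * x) - Real.sin (p₂ * x)) / q₂) _ _)]
    rw [L3 p₁ q₁ hp₁ hq₁, L3 p₂ q₂ hp₂ hq₂]
    have c1 : Real.cos p₁ = Real.cos (2 * π * u) := by
      have : p₁ = -(2 * π * u) + ((2 * D - s - t + 1 : ℤ) : ℝ) * (2 * π) := by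
        rw [hp₁def]; push_cast; ring
      rw [this, Real.cos_add_int_mul_two_pi, Real.cos_neg]
    have c2 : Real.cos q₁ = Real.cos (2 * π * u) := by
      have : q₁ = (2 * π * u) + ((s + t : ℤ) : ℝ) * (2 * π) := by
        rw [hq₁def]; push_cast; ring
      rw [this, Real.cos_add_int_mul_two_pi]
    have c3 : Real.cos (p₁ + q₁) = 1 := by
      have : p₁ + q₁ = ((2 * D + 1 : ℤ) : ℝ) * (2 * π) := by
        rw [hp₁def, hq₁def]; push_cast; ring
      rw [this, Real.cos_int_mul_two_pi]
    have c4 : Real.cos p₂ = Real.cos (2 * π * u) := by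
      have : p₂ = -(2 * π * u) + ((t - s + 1 : ℤ) : ℝ) * (2 * π) := by
        rw [hp₂def]; push_cast; ring
      rw [this, Real.cos_add_int_mul_two_pi, Real.cos_neg]
    have c5 : Real.cos q₂ = Real.cos (2 * π * u) := by
      have : q₂ = (2 * π * u) + ((s - t : ℤ) : ℝ) * (2 * π) := by
        rw [hq₂def]; push_cast; ring
      rw [this, Real.cos_add_int_mul_two_pi]
    have c6 : Real.cos (p₂ + q₂) = 1 := by
      have : p₂ + q₂ = 2 * π := by rw [hp₂def, hq₂def]; ring
      rw [this, Real.cos_two_pi]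
    have cS : Real.cos (2 * π * u) = 1 - 2 * Real.sin (Real.pi * (s : ℝ) / (D : ℝ)) ^ 2 := by
      have harg : 2 * π * u = 2 * (Real.pi * (s : ℝ) / (D : ℝ)) := by rw [hu]; ring
      rw [harg, Real.cos_two_mul]
      have := Real.sin_sq_add_cos_sq (Real.pi * (s : ℝ) / (D : ℝ))
      linarith
    rw [c1, c2, c3, c4, c5, c6, cS, hp₁def, hq₁def, hp₂def, hq₂def]
    have hA1 : ((t:ℝ) - s - u) ≠ 0 := ne_of_gt A1
    have hA2 : ((t:ℝ) - s + 1 - u) ≠ 0 := ne_of_gt A2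
    have hA3 : ((s:ℝ) + t + u) ≠ 0 := ne_of_gt A3
    have hA4 : (2 * (D:ℝ) - s - t + 1 - u) ≠ 0 := ne_of_gt A4
    have hsu : ((s:ℝ) + u - t) ≠ 0 := by intro h; nlinarith
    have hπ' : π ≠ 0 := ne_of_gt hπ
    field_simp
    ring
  subst hu
  refine ⟨key, ?_, ?_⟩
  · intro hspos
    rw [key]
    have hSpos : 0 < Real.sin (Real.pi * (s : ℝ) / (D : ℝ)) := by
      apply Real.sin_pos_of_pos_of_lt_pi
      · have : (0:ℝ) < (s:ℝ) := by exact_mod_cast hspos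
        positivity
      · rw [div_lt_iff₀ hDpos]
        have : (s:ℝ) < D := by exact_mod_cast hsD
        nlinarith
    have hsR1 : (1:ℝ) ≤ (s:ℝ) := by exact_mod_cast hspos
    have hAB : ((t:ℝ) - s - (s:ℝ)/(D:ℝ)) * ((t:ℝ) - s + 1 - (s:ℝ)/(D:ℝ))
        < ((s:ℝ) + t + (s:ℝ)/(D:ℝ)) * (2 * (D:ℝ) - s - t + 1 - (s:ℝ)/(D:ℝ)) := by
      nlinarith
    have hb : 0 < 1 / (((t : ℝ) - (s : ℝ) - (s:ℝ)/(D:ℝ)) * ((t : ℝ) - (s : ℝ) + 1 - (s:ℝ)/(D:ℝ)))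
        - 1 / (((s : ℝ) + (t : ℝ) + (s:ℝ)/(D:ℝ)) * (2 * (D : ℝ) - (s : ℝ) - (t : ℝ) + 1 - (s:ℝ)/(D:ℝ))) := by
      have := one_div_lt_one_div_of_lt (mul_pos A1 A2) hAB
      linarith
    have : 0 < Real.sin (Real.pi * (s : ℝ) / (D : ℝ)) ^ 2 / (2 * Real.pi ^ 2) := by positivity
    exact mul_pos this hb
  · intro hs0
    rw [key]
    subst hs0
    simp
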